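/- arXiv:2304.03723 — 2 statements merged into one kernel-verified Lean document; each statement's English description precedes it below -/
import Mathlib

section
/- Let D be an integral domain, m a maximal ideal of D, and t an indeterminate. Then the extension m·D(t) is a maximal ideal of the Nagata ring D(t), and the localization of D(t) at m·D(t) equals D_m(t). Consequently D(t) = ⋂_{m maximal} D_m(t). -/
/-!
Write elements of `D(t)` as `f / g` with `c(g) = D`. Then `m·D(t)` consists of the `f / g` with
`f ∈ m[X]`. If `f ∉ m[X]`, some coefficient of `f` is invertible modulo `m`, so adding to `f` a
term `c t^N` with `c ∈ m` and `N` large gives a polynomial `P` of unit content, and `g / P`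
inverts `f / g` modulo `m·D(t)`; hence `m·D(t)` is maximal.

Since `m[X]` is prime in `D[X]` and contains no polynomial of unit content, a polynomial `G` lies
in `m·D(t)` only if `G ∈ m[X]`; and over the local ring `D_m` a polynomial has unit content as
soon as one coefficient lies outside `m`. So the localization of `D(t)` at `m·D(t)` and `D_m(t)`
are both the set of fractions `F / G` of polynomials over `D` with `G ∉ m[X]`.

For the intersection, the contents of the polynomials `g` with `x g ∈ D[X]` form an ideal
(replacing `g₁, g₂` by `g₁ t^N + g₂` adds contents). If `x ∈ D_m(t)` for every maximal `m`,
this ideal lies in no maximal ideal, so some such `g` has unit content and `x ∈ D(t)`.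
-/

open Polynomial
variable {K : Type*} [Field K]

/-- A polynomial has *unit content* if its coefficients generate the unit ideal. -/
def UnitContent {R : Type*} [CommRing R] (p : Polynomial R) : Prop :=
  Ideal.span (Set.range p.coeff) = ⊤

theorem unitContent_one {R : Type*} [CommRing R] : UnitContent (1 : Polynomial R) := by
  rw [UnitContent, Ideal.eq_top_iff_one]
  exact Ideal.subset_span ⟨0, by simp⟩

theorem unitContent_mul {R : Type*} [CommRing R] [Nontrivial R] {p q : Polynomial R}
    (hp : UnitContent p) (hq : UnitContent q) : UnitContent (p * q) := by
  by_contra h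
  obtain ⟨m, hm, hle⟩ := Ideal.exists_le_maximal _ ((Ideal.ne_top_iff_one _).mpr
    (fun h1 => h (by rwa [UnitContent, Ideal.eq_top_iff_one])))
  have key : ∀ r : Polynomial R, UnitContent r →
      Polynomial.map (Ideal.Quotient.mk m) r ≠ 0 := by
    intro r hr hr0
    have : Set.range r.coeff ⊆ (m : Set R) := by
      rintro _ ⟨n, rfl⟩
      have := congrArg (fun s => Polynomial.coeff s n) hr0
      simp only [Polynomial.coeff_map, Polynomial.coeff_zero] at this
      exact Ideal.Quotient.eq_zero_iff_mem.mp this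
    have : Ideal.span (Set.range r.coeff) ≤ m := Ideal.span_le.mpr this
    rw [hr] at this
    exact hm.ne_top (top_le_iff.mp this)
  have h0 : Polynomial.map (Ideal.Quotient.mk m) (p * q) ≠ 0 := by
    rw [Polynomial.map_mul]
    exact mul_ne_zero (key p hp) (key q hq)
  obtain ⟨n, hn⟩ : ∃ n, (Polynomial.map (Ideal.Quotient.mk m) (p * q)).coeff n ≠ 0 := by
    by_contra hc
    push_neg at hc
    exact h0 (Polynomial.ext fun n => by simpa using hc n)
  rw [Polynomial.coeff_map] at hn
  exact hn (Ideal.Quotient.eq_zero_iff_mem.mpr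
    (hle (Ideal.subset_span ⟨n, rfl⟩)))

/-- The natural map from polynomials over a subring `B ⊆ K` to `RatFunc K`. -/
noncomputable def nagataHom (B : Subring K) : Polynomial B →+* RatFunc K :=
  (algebraMap (Polynomial K) (RatFunc K)).comp (Polynomial.mapRingHom B.subtype)

theorem nagataHom_injective (B : Subring K) : Function.Injective (nagataHom B) :=
  (RatFunc.algebraMap_injective K).comp
    (Polynomial.map_injective _ B.subtype_injective)

theorem nagataHom_ne_zero {B : Subring K} {q : Polynomial B} (hq : UnitContent q) :
    nagataHom B q ≠ 0 := by
  intro h0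
  have : q = 0 := nagataHom_injective B (by simpa using h0)
  subst this
  rw [UnitContent] at hq
  have : Set.range (0 : Polynomial B).coeff = {0} := by
    ext x; simp [eq_comm]
  rw [this] at hq
  simp at hq

/-- The Nagata ring `B(t)` of a subring `B` of a field `K`, realized as a subring of the
rational function field `RatFunc K`: the set of fractions `f/g` of polynomials with
coefficients in `B` such that the content of `g` is the unit ideal of `B`. -/
noncomputable def Subring.nagata (B : Subring K) : Subring (RatFunc K) where
  carrier := { x | ∃ p q : Polynomial B, UnitContent q ∧ x = nagataHom B p / nagataHom B q }
  zero_mem' := ⟨0, 1, unitContent_one, by simp⟩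
  one_mem' := ⟨1, 1, unitContent_one, by simp⟩
  add_mem' := by
    rintro x y ⟨p, q, hq, rfl⟩ ⟨p', q', hq', rfl⟩
    refine ⟨p * q' + p' * q, q * q', unitContent_mul hq hq', ?_⟩
    rw [div_add_div _ _ (nagataHom_ne_zero hq) (nagataHom_ne_zero hq'),
      (nagataHom B).map_add, (nagataHom B).map_mul, (nagataHom B).map_mul,
      (nagataHom B).map_mul]
    ring
  neg_mem' := by
    rintro x ⟨p, q, hq, rfl⟩
    exact ⟨-p, q, hq, by rw [(nagataHom B).map_neg, neg_div]⟩
  mul_mem' := by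
    rintro x y ⟨p, q, hq, rfl⟩ ⟨p', q', hq', rfl⟩
    exact ⟨p * p', q * q', unitContent_mul hq hq', by rw [(nagataHom B).map_mul,
      (nagataHom B).map_mul, div_mul_div_comm]⟩

theorem mem_nagata_C (B : Subring K) (b : B) : RatFunc.C (b : K) ∈ B.nagata := by
  refine ⟨Polynomial.C b, 1, unitContent_one, ?_⟩
  simp [nagataHom, RatFunc.algebraMap_C]

/-- The canonical ring homomorphism `B → B(t)` sending `b` to the constant `b`. -/
noncomputable def nagataC (B : Subring K) : B →+* B.nagata where
  toFun b := ⟨RatFunc.C (b : K), mem_nagata_C B b⟩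
  map_one' := Subtype.ext (by simp)
  map_mul' x y := Subtype.ext (by push_cast; simp)
  map_zero' := Subtype.ext (by simp)
  map_add' x y := Subtype.ext (by push_cast; simp)

/-- The localization `D_m` of a subring `D` of a field `K` at a prime ideal `m`,
realized as a subring of `K`. -/
def Subring.locAt (D : Subring K) (m : Ideal D) (hm : m.IsPrime) : Subring K where
  carrier := {x | ∃ a s : D, s ∉ m ∧ x = (a : K) / (s : K)}
  zero_mem' := ⟨0, 1, fun h => hm.ne_top (m.eq_top_of_isUnit_mem h isUnit_one), by simp⟩
  one_mem' := ⟨1, 1, fun h => hm.ne_top (m.eq_top_of_isUnit_mem h isUnit_one), by simp⟩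
  add_mem' := by
    rintro x y ⟨a, s, hs, rfl⟩ ⟨a', s', hs', rfl⟩
    have h0 : (s : K) ≠ 0 := fun h => hs (by
      have : s = 0 := Subtype.ext h
      rw [this]; exact m.zero_mem)
    have h0' : (s' : K) ≠ 0 := fun h => hs' (by
      have : s' = 0 := Subtype.ext h
      rw [this]; exact m.zero_mem)
    refine ⟨a * s' + a' * s, s * s',
      fun h => ((hm.mem_or_mem h).elim hs hs'), ?_⟩
    rw [div_add_div _ _ h0 h0']
    push_cast
    ring_nf
  neg_mem' := by
    rintro x ⟨a, s, hs, rfl⟩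
    exact ⟨-a, s, hs, by push_cast; rw [neg_div]⟩
  mul_mem' := by
    rintro x y ⟨a, s, hs, rfl⟩ ⟨a', s', hs', rfl⟩
    exact ⟨a * a', s * s', fun h => ((hm.mem_or_mem h).elim hs hs'),
      by push_cast; rw [div_mul_div_comm]⟩

section Content

variable {R : Type*} [CommRing R]

theorem Polynomial.span_range_coeff_eq_contentIdeal (p : R[X]) :
    Ideal.span (Set.range p.coeff) = p.contentIdeal := by
  refine le_antisymm (Ideal.span_le.mpr ?_) (Ideal.span_mono fun c hc => ?_)
  · rintro _ ⟨n, rfl⟩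
    exact p.coeff_mem_contentIdeal n
  · obtain ⟨n, -, rfl⟩ := mem_coeffs_iff.mp hc
    exact ⟨n, rfl⟩

theorem Polynomial.contentIdeal_le_iff {p : R[X]} {I : Ideal R} :
    p.contentIdeal ≤ I ↔ ∀ n, p.coeff n ∈ I := by
  rw [← span_range_coeff_eq_contentIdeal, Ideal.span_le, Set.range_subset_iff]
  rfl

theorem Polynomial.contentIdeal_sup_le_contentIdeal_mul_X_pow_add {f g : R[X]} {N : ℕ}
    (hN : g.natDegree < N) : f.contentIdeal ⊔ g.contentIdeal ≤ (f * X ^ N + g).contentIdeal := by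
  refine sup_le (contentIdeal_le_iff.mpr fun k => ?_) (contentIdeal_le_iff.mpr fun k => ?_)
  · have hg : g.coeff (k + N) = 0 := coeff_eq_zero_of_natDegree_lt (by omega)
    convert (f * X ^ N + g).coeff_mem_contentIdeal (k + N) using 1
    simp [coeff_mul_X_pow, hg]
  · by_cases hk : k < N
    · convert (f * X ^ N + g).coeff_mem_contentIdeal k using 1
      simp [coeff_mul_X_pow', Nat.not_le.mpr hk]
    · simp [coeff_eq_zero_of_natDegree_lt (hN.trans_le (Nat.not_lt.mp hk))]

theorem unitContent_iff_contentIdeal_eq_top {p : R[X]} :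
    UnitContent p ↔ p.contentIdeal = ⊤ := by
  rw [UnitContent, p.span_range_coeff_eq_contentIdeal]

theorem unitContent_of_isUnit_coeff {p : R[X]} {n : ℕ} (h : IsUnit (p.coeff n)) :
    UnitContent p :=
  Ideal.eq_top_of_isUnit_mem _ (Ideal.subset_span ⟨n, rfl⟩) h

theorem UnitContent.map {S : Type*} [CommRing S] {p : R[X]} (hp : UnitContent p)
    (f : R →+* S) : UnitContent (p.map f) := by
  rw [unitContent_iff_contentIdeal_eq_top] at hp ⊢
  rw [contentIdeal_map_eq_map_contentIdeal, hp, Ideal.map_top]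

theorem UnitContent.notMem_map_C {p : R[X]} (hp : UnitContent p) {I : Ideal R} (hI : I ≠ ⊤) :
    p ∉ I.map C := by
  rw [Ideal.mem_map_C_iff, ← contentIdeal_le_iff, unitContent_iff_contentIdeal_eq_top.mp hp]
  exact fun h => hI (top_le_iff.mp h)

theorem UnitContent.mem_map_C_of_mul_mem {I : Ideal R} [I.IsPrime] {p q : R[X]}
    (hq : UnitContent q) (hpq : p * q ∈ I.map C) : p ∈ I.map C :=
  (Ideal.IsPrime.mem_or_mem inferInstance hpq).resolve_right
    (hq.notMem_map_C (Ideal.IsPrime.ne_top ‹_›))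

/-- `c` comes from `b * p.coeff n + c = 1`; placed beyond the degree of `p`, it leaves
`p.coeff n` untouched. -/
theorem exists_unitContent_add_C_mul_X_pow {m : Ideal R} (hm : m.IsMaximal) {p : R[X]} {n : ℕ}
    (hn : p.coeff n ∉ m) : ∃ c ∈ m, UnitContent (p + C c * X ^ (p.natDegree + 1)) := by
  obtain ⟨b, c, hc, hbc⟩ := hm.exists_inv hn
  have hnN : n ≠ p.natDegree + 1 := by
    rintro rfl
    rw [coeff_eq_zero_of_natDegree_lt (Nat.lt_succ_self _)] at hn
    exact hn m.zero_mem
  refine ⟨c, hc, ?_⟩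
  rw [unitContent_iff_contentIdeal_eq_top, Ideal.eq_top_iff_one, ← hbc]
  refine Ideal.add_mem _ (Ideal.mul_mem_left _ b ?_) ?_
  · convert (p + C c * X ^ (p.natDegree + 1)).coeff_mem_contentIdeal n using 1
    simp [coeff_X_pow, hnN]
  · convert (p + C c * X ^ (p.natDegree + 1)).coeff_mem_contentIdeal (p.natDegree + 1) using 1
    simp

theorem Ideal.isMaximal_of_forall_exists_mul_sub_one_mem {I : Ideal R} (hI : (1 : R) ∉ I)
    (h : ∀ x ∉ I, ∃ y, x * y - 1 ∈ I) : I.IsMaximal := by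
  refine Ideal.isMaximal_iff.mpr ⟨hI, fun J x hIJ hx hxJ => ?_⟩
  obtain ⟨y, hy⟩ := h x hx
  simpa using J.sub_mem (J.mul_mem_right y hxJ) (hIJ hy)

end Content

section NagataRing

variable (B : Subring K)

theorem nagataHom_C (b : B) : nagataHom B (C b) = RatFunc.C (b : K) := by
  simp [nagataHom, RatFunc.algebraMap_C]

theorem nagataHom_map_inclusion {B' : Subring K} (h : B ≤ B') (p : B[X]) :
    nagataHom B' (p.map (Subring.inclusion h)) = nagataHom B p := by
  simp only [nagataHom, RingHom.comp_apply, coe_mapRingHom, map_map]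
  rfl

theorem div_mem_nagata (p : B[X]) {q : B[X]} (hq : UnitContent q) :
    nagataHom B p / nagataHom B q ∈ B.nagata :=
  ⟨p, q, hq, rfl⟩

theorem nagataHom_mem_nagata (p : B[X]) : nagataHom B p ∈ B.nagata := by
  simpa using div_mem_nagata B p unitContent_one

theorem nagata_mono {B' : Subring K} (h : B ≤ B') : B.nagata ≤ B'.nagata := by
  rintro _ ⟨p, q, hq, rfl⟩
  rw [← nagataHom_map_inclusion B h, ← nagataHom_map_inclusion B h q]
  exact div_mem_nagata B' _ (hq.map _)

noncomputable def nagataPoly : B[X] →+* B.nagata :=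
  (nagataHom B).codRestrict B.nagata (nagataHom_mem_nagata B)

@[simp]
theorem coe_nagataPoly (p : B[X]) : (nagataPoly B p : RatFunc K) = nagataHom B p := rfl

theorem nagataPoly_comp_C : (nagataPoly B).comp C = nagataC B :=
  RingHom.ext fun b => Subtype.ext (nagataHom_C B b)

noncomputable def Subring.nagataIdeal (I : Ideal B) : Ideal B.nagata where
  carrier := {x | ∃ p q : B[X], p ∈ I.map C ∧ UnitContent q ∧
    (x : RatFunc K) = nagataHom B p / nagataHom B q}
  zero_mem' := ⟨0, 1, zero_mem _, unitContent_one, by simp⟩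
  add_mem' := by
    rintro x y ⟨p, q, hp, hq, hx⟩ ⟨p', q', hp', hq', hy⟩
    refine ⟨p * q' + p' * q, q * q', add_mem (Ideal.mul_mem_right _ _ hp)
      (Ideal.mul_mem_right _ _ hp'), unitContent_mul hq hq', ?_⟩
    rw [Subring.coe_add, hx, hy, div_add_div _ _ (nagataHom_ne_zero hq) (nagataHom_ne_zero hq')]
    simp only [map_add, map_mul, mul_comm (nagataHom B q)]
  smul_mem' := by
    rintro ⟨_, p', q', hq', rfl⟩ x ⟨p, q, hp, hq, hx⟩
    refine ⟨p' * p, q' * q, Ideal.mul_mem_left _ _ hp, unitContent_mul hq' hq, ?_⟩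
    rw [smul_eq_mul, Subring.coe_mul, hx, map_mul, map_mul, div_mul_div_comm]

theorem map_nagataC_eq_nagataIdeal (I : Ideal B) : I.map (nagataC B) = B.nagataIdeal I := by
  refine le_antisymm (Ideal.map_le_iff_le_comap.mpr fun a ha => ?_) ?_
  · exact ⟨C a, 1, Ideal.mem_map_of_mem C ha, unitContent_one, by simp [nagataHom_C, nagataC]⟩
  · rintro x ⟨p, q, hp, hq, hx⟩
    have hpI : nagataPoly B p ∈ I.map (nagataC B) := by
      rw [← nagataPoly_comp_C, ← Ideal.map_map]
      exact Ideal.mem_map_of_mem _ hp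
    have hx' : x = nagataPoly B p * ⟨nagataHom B 1 / nagataHom B q, div_mem_nagata B 1 hq⟩ :=
      Subtype.ext (by simp [hx, div_eq_mul_inv])
    exact hx' ▸ Ideal.mul_mem_right _ _ hpI

theorem nagataPoly_mem_map_nagataC_iff {I : Ideal B} [I.IsPrime] {G : B[X]} :
    nagataPoly B G ∈ I.map (nagataC B) ↔ G ∈ I.map C := by
  refine ⟨?_, fun hG => ?_⟩
  · rw [map_nagataC_eq_nagataIdeal]
    rintro ⟨p, q, hp, hq, hG⟩
    have hGq : G * q = p := nagataHom_injective B <| by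
      rw [map_mul, ← coe_nagataPoly, hG, div_mul_cancel₀ _ (nagataHom_ne_zero hq)]
    exact hq.mem_map_C_of_mul_mem (hGq ▸ hp)
  · rw [← nagataPoly_comp_C, ← Ideal.map_map]
    exact Ideal.mem_map_of_mem _ hG

end NagataRing

section Maximal

variable {B : Subring K} {m : Ideal B}

theorem one_notMem_nagataIdeal (hm : m ≠ ⊤) : 1 ∉ B.nagataIdeal m := by
  rintro ⟨p, q, hp, hq, h1⟩
  have hpq : p = q := nagataHom_injective B <|
    ((div_eq_one_iff_eq (nagataHom_ne_zero hq)).mp h1.symm)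
  exact hq.notMem_map_C hm (hpq ▸ hp)

theorem exists_mul_sub_one_mem_nagataIdeal (hm : m.IsMaximal) {x : B.nagata}
    (hx : x ∉ B.nagataIdeal m) : ∃ y, x * y - 1 ∈ B.nagataIdeal m := by
  obtain ⟨p, q, hq, hxpq⟩ := x.2
  have hp : p ∉ m.map C := fun hp => hx ⟨p, q, hp, hq, hxpq⟩
  obtain ⟨n, hn⟩ : ∃ n, p.coeff n ∉ m := by simpa [Ideal.mem_map_C_iff] using hp
  obtain ⟨c, hc, hP⟩ := exists_unitContent_add_C_mul_X_pow hm hn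
  set h := C c * X ^ (p.natDegree + 1)
  refine ⟨⟨nagataHom B q / nagataHom B (p + h), div_mem_nagata B q hP⟩, -h, p + h,
    neg_mem (Ideal.mul_mem_right _ _ (Ideal.mem_map_of_mem C hc)), hP, ?_⟩
  have hP0 := nagataHom_ne_zero hP
  have hq0 := nagataHom_ne_zero hq
  change (x : RatFunc K) * (nagataHom B q / nagataHom B (p + h)) - 1 =
    nagataHom B (-h) / nagataHom B (p + h)
  rw [map_add] at hP0 ⊢
  rw [hxpq, map_neg]
  field_simp
  ring

theorem isMaximal_nagataIdeal (hm : m.IsMaximal) : (B.nagataIdeal m).IsMaximal :=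
  Ideal.isMaximal_of_forall_exists_mul_sub_one_mem (one_notMem_nagataIdeal hm.ne_top)
    fun _ hx => exists_mul_sub_one_mem_nagataIdeal hm hx

end Maximal

section Localization

variable {D : Subring K} {m : Ideal D}

theorem coe_ne_zero_of_notMem {s : D} (hs : s ∉ m) : (s : K) ≠ 0 := fun h0 =>
  hs (ZeroMemClass.coe_eq_zero.mp h0 ▸ m.zero_mem)

theorem le_locAt (hm : m.IsPrime) : D ≤ D.locAt m hm :=
  fun a ha => ⟨⟨a, ha⟩, 1, m.one_notMem, by simp⟩

noncomputable instance (hm : m.IsPrime) : Algebra D (D.locAt m hm) :=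
  (Subring.inclusion (le_locAt hm)).toAlgebra

theorem coe_algebraMap_locAt (hm : m.IsPrime) (a : D) :
    (algebraMap D (D.locAt m hm) a : K) = a := rfl

instance [hm : m.IsPrime] : IsLocalization.AtPrime (D.locAt m hm) m := by
  refine (isLocalization_iff _ _).mpr ⟨fun ⟨s, hs⟩ => ?_, fun ⟨x, a, s, hs, hx⟩ => ?_, fun {x y} h => ?_⟩
  · refine isUnit_iff_exists_inv.mpr ⟨⟨1 / s, 1, s, hs, by simp⟩, Subtype.ext ?_⟩
    simp [coe_algebraMap_locAt, coe_ne_zero_of_notMem hs]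
  · refine ⟨(a, ⟨s, hs⟩), Subtype.ext ?_⟩
    simp [coe_algebraMap_locAt, hx, coe_ne_zero_of_notMem hs]
  · exact ⟨1, by rw [show x = y from Subtype.ext (congrArg (fun z : D.locAt m hm => (z : K)) h)]⟩

variable [hm : m.IsPrime]

theorem exists_map_algebraMap_eq_C_mul (f : (D.locAt m hm)[X]) :
    ∃ b ∉ m, ∃ F : D[X], F.map (algebraMap D _) = C (algebraMap D _ b) * f := by
  obtain ⟨b, hb, hF⟩ := IsLocalization.integerNormalization_spec m.primeCompl f
  exact ⟨b, hb, _, by rw [hF, Algebra.smul_def, Polynomial.algebraMap_apply]⟩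

theorem nagataHom_map_algebraMap_locAt (F : D[X]) :
    nagataHom (D.locAt m hm) (F.map (algebraMap D _)) = nagataHom D F :=
  nagataHom_map_inclusion D (le_locAt hm) F

theorem notMem_map_C_of_map_algebraMap_eq_C_mul {g : (D.locAt m hm)[X]} (hg : UnitContent g)
    {b : D} (hb : b ∉ m) {G : D[X]} (hG : G.map (algebraMap D _) = C (algebraMap D _ b) * g) :
    G ∉ m.map C := by
  have := IsLocalization.AtPrime.isLocalRing (D.locAt m hm) m
  refine fun hGm => hg.notMem_map_C (IsLocalRing.maximalIdeal.isMaximal _).ne_top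
    (Ideal.mem_map_C_iff.mpr fun n => ?_)
  have hbn : algebraMap D _ b * g.coeff n = algebraMap D _ (G.coeff n) := by
    rw [← coeff_C_mul, ← hG, coeff_map]
  rw [← Ideal.unit_mul_mem_iff_mem _ ((IsLocalization.AtPrime.isUnit_to_map_iff _ m b).mpr hb),
    hbn, IsLocalization.AtPrime.to_map_mem_maximal_iff _ m]
  exact Ideal.mem_map_C_iff.mp hGm n

theorem exists_eq_div_of_mem_nagata_locAt {x : RatFunc K} (hx : x ∈ (D.locAt m hm).nagata) :
    ∃ F G : D[X], G ∉ m.map C ∧ x = nagataHom D F / nagataHom D G := by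
  obtain ⟨f, g, hg, rfl⟩ := hx
  obtain ⟨a, ha, F, hF⟩ := exists_map_algebraMap_eq_C_mul f
  obtain ⟨b, hb, G, hG⟩ := exists_map_algebraMap_eq_C_mul g
  refine ⟨C b * F, C a * G, fun h => ?_, ?_⟩
  · refine (Ideal.IsPrime.mem_or_mem inferInstance h).elim (fun haC => ha ?_)
      (notMem_map_C_of_map_algebraMap_eq_C_mul hg hb hG)
    simpa using Ideal.mem_map_C_iff.mp haC 0
  · have hab : RatFunc.C (a : K) * RatFunc.C (b : K) ≠ 0 := by
      simp [coe_ne_zero_of_notMem ha, coe_ne_zero_of_notMem hb]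
    rw [map_mul, map_mul, nagataHom_C, nagataHom_C, ← nagataHom_map_algebraMap_locAt (m := m),
      ← nagataHom_map_algebraMap_locAt (m := m) G, hF, hG, map_mul, map_mul, nagataHom_C,
      nagataHom_C, ← mul_div_mul_left _ _ hab]
    simp only [coe_algebraMap_locAt]
    ring_nf

theorem div_mem_nagata_locAt (p : D[X]) {q : D[X]} (hq : q ∉ m.map C) :
    nagataHom D p / nagataHom D q ∈ (D.locAt m hm).nagata := by
  obtain ⟨n, hn⟩ : ∃ n, q.coeff n ∉ m := by simpa [Ideal.mem_map_C_iff] using hq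
  rw [← nagataHom_map_algebraMap_locAt (m := m), ← nagataHom_map_algebraMap_locAt (m := m) q]
  refine div_mem_nagata _ _ (unitContent_of_isUnit_coeff (n := n) ?_)
  rw [coeff_map]
  exact (IsLocalization.AtPrime.isUnit_to_map_iff (D.locAt m hm) m _).mpr hn

end Localization

theorem setOf_div_notMem_map_nagataC_eq_nagata_locAt {D : Subring K} {m : Ideal D}
    [hm : m.IsPrime] :
    {x : RatFunc K | ∃ a s : D.nagata, s ∉ Ideal.map (nagataC D) m ∧
        x = (a : RatFunc K) / (s : RatFunc K)} = ((D.locAt m hm).nagata : Set (RatFunc K)) := by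
  ext x
  refine ⟨?_, fun hx => ?_⟩
  · rintro ⟨⟨_, p, q, hq, rfl⟩, ⟨_, p', q', hq', rfl⟩, hs, rfl⟩
    have hp' : p' ∉ m.map C := fun h => hs <| by
      rw [map_nagataC_eq_nagataIdeal]
      exact ⟨p', q', h, hq', rfl⟩
    have hqp' : q * p' ∉ m.map C := fun h =>
      (Ideal.IsPrime.mem_or_mem inferInstance h).elim (hq.notMem_map_C hm.ne_top)
        hp'
    rw [SetLike.mem_coe, div_div_div_eq, ← map_mul, ← map_mul]
    exact div_mem_nagata_locAt (p * q') hqp'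
  · obtain ⟨F, G, hG, rfl⟩ := exists_eq_div_of_mem_nagata_locAt hx
    exact ⟨nagataPoly D F, nagataPoly D G, (nagataPoly_mem_map_nagataC_iff D).not.mpr hG, rfl⟩

noncomputable def Subring.nagataDenomIdeal (D : Subring K) (x : RatFunc K) : Ideal D where
  carrier := {d | ∃ g : D[X], x * nagataHom D g ∈ (nagataHom D).range ∧ d ∈ g.contentIdeal}
  zero_mem' := ⟨0, by simp, zero_mem _⟩
  add_mem' := by
    rintro d e ⟨f, ⟨F, hF⟩, hd⟩ ⟨g, ⟨G, hG⟩, he⟩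
    refine ⟨f * X ^ (g.natDegree + 1) + g, ⟨F * X ^ (g.natDegree + 1) + G, ?_⟩,
      contentIdeal_sup_le_contentIdeal_mul_X_pow_add (Nat.lt_succ_self _)
        (Submodule.add_mem_sup hd he)⟩
    rw [map_add, map_mul, hF, hG, map_add, map_mul]
    ring
  smul_mem' c _ := fun ⟨g, hg, hd⟩ => ⟨g, hg, Ideal.mul_mem_left _ c hd⟩

theorem mem_nagata_of_one_mem_nagataDenomIdeal {D : Subring K} {x : RatFunc K}
    (h : 1 ∈ D.nagataDenomIdeal x) : x ∈ D.nagata := by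
  obtain ⟨g, ⟨F, hF⟩, hg⟩ := h
  have hg : UnitContent g := unitContent_iff_contentIdeal_eq_top.mpr <|
    (Ideal.eq_top_iff_one _).mpr hg
  rw [eq_div_of_mul_eq (nagataHom_ne_zero hg) hF.symm]
  exact div_mem_nagata D F hg

theorem nagataDenomIdeal_eq_top {D : Subring K} {x : RatFunc K}
    (hx : ∀ mm : MaximalSpectrum D, x ∈ (D.locAt mm.asIdeal mm.isMaximal.isPrime).nagata) :
    D.nagataDenomIdeal x = ⊤ := by
  by_contra h
  obtain ⟨m, hm, hle⟩ := Ideal.exists_le_maximal _ h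
  have := hm.isPrime
  obtain ⟨F, G, hG, rfl⟩ := exists_eq_div_of_mem_nagata_locAt (hx ⟨m, hm⟩)
  have hG0 : nagataHom D G ≠ 0 := by
    rw [map_ne_zero_iff _ (nagataHom_injective D)]
    rintro rfl
    exact hG (zero_mem _)
  refine hG (Ideal.mem_map_C_iff.mpr fun n => hle ⟨G, ⟨F, ?_⟩, G.coeff_mem_contentIdeal n⟩)
  rw [div_mul_cancel₀ _ hG0]

theorem iInf_nagata_locAt (D : Subring K) :
    ⨅ mm : MaximalSpectrum D, (D.locAt mm.asIdeal mm.isMaximal.isPrime).nagata = D.nagata := by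
  refine le_antisymm (fun x hx => ?_) (le_iInf fun mm => nagata_mono D (le_locAt _))
  refine mem_nagata_of_one_mem_nagataDenomIdeal ?_
  rw [nagataDenomIdeal_eq_top (Subring.mem_iInf.mp hx)]
  exact Submodule.mem_top

theorem nagata_maximal_extension_localization_intersection_general
    (D : Subring K)
    (m : Ideal D) (hm : m.IsMaximal) :
    (Ideal.map (nagataC D) m).IsMaximal ∧
      {x : RatFunc K | ∃ a s : D.nagata, s ∉ Ideal.map (nagataC D) m ∧
          x = (a : RatFunc K) / (s : RatFunc K)} =
        ((D.locAt m hm.isPrime).nagata : Set (RatFunc K)) ∧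
      D.nagata = ⨅ mm : MaximalSpectrum D,
        (D.locAt mm.asIdeal mm.isMaximal.isPrime).nagata := by
  have := hm.isPrime
  refine ⟨?_, setOf_div_notMem_map_nagataC_eq_nagata_locAt, (iInf_nagata_locAt D).symm⟩
  rw [map_nagataC_eq_nagataIdeal]
  exact isMaximal_nagataIdeal hm

/-- **Facts about Nagata rings (Section 2).**
Let `D` be an integral domain with quotient field `K` and `m` a maximal ideal of `D`.
Then the extension `m·D(t)` is a maximal ideal of the Nagata ring `D(t)`, the
localization of `D(t)` at `m·D(t)` equals `D_m(t)` (as subrings of the rational function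
field), and consequently `D(t) = ⋂_{m maximal} D_m(t)`. -/
theorem nagata_maximal_extension_localization_intersection
    (D : Subring K) (hfrac : ∀ x : K, ∃ a ∈ D, ∃ b ∈ D, b ≠ 0 ∧ x = a / b)
    (m : Ideal D) (hm : m.IsMaximal) :
    (Ideal.map (nagataC D) m).IsMaximal ∧
      {x : RatFunc K | ∃ a s : D.nagata, s ∉ Ideal.map (nagataC D) m ∧
          x = (a : RatFunc K) / (s : RatFunc K)} =
        ((D.locAt m hm.isPrime).nagata : Set (RatFunc K)) ∧
      D.nagata = ⨅ mm : MaximalSpectrum D,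
        (D.locAt mm.asIdeal mm.isMaximal.isPrime).nagata :=
  nagata_maximal_extension_localization_intersection_general D m hm
end

section
/- Let K be a field and S a numerical-semigroup-like submonoid of G_{≥0} for G a rank-one subgroup of ℝ, with D = [[K^S]] ⊆ V = [[K^{G_{≥0}}]] having the same quotient field. If D is maximal excluding (with excluded element X^a for some a ∈ G_{≥0}\S), then the integral closure of D is V. More precisely, the root closure S̄ = ⋃_{n≥1}{g ∈ G : ng ∈ S} equals G_{≥0}. -/
/-!
Every `h > a` lies in `S`: otherwise `X^h` lies in `V`, hence in the quotient field of `D`, but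
not in `D`, so maximality puts `X^a` into `D[X^h] ⊆ [[K^{S + ℕh}]]`, i.e. `a = s + n • h` with
`s ∈ S`; this is impossible, as `a ∉ S` and `n • h ≥ h > a` for `n ≥ 1`. By the Archimedean
property every `g > 0` has a multiple beyond `a`, which gives `S̄ = G_{≥0}`. For the same reason,
if `x ∈ V` then `z = x - x₀ X^0` has positive support and some power `z^n` lies in `D`, so
`x = x₀ + z` is integral over `D`. Conversely `V` is the ring of integers of the order valuation,
hence integrally closed.
-/

variable {Γ : Type*} [AddCommGroup Γ] [LinearOrder Γ] [IsOrderedAddMonoid Γ] {K : Type*} [Field K]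

/-- The generalized power series ring `[[K^S]]`: the subring of the Hahn series field
`HahnSeries Γ K` consisting of series with support contained in the submonoid `S`. -/
def hahnSubring (K : Type*) [Field K] (S : AddSubmonoid Γ) : Subring (HahnSeries Γ K) where
  carrier := {f | ∀ g : Γ, f.coeff g ≠ 0 → g ∈ S}
  zero_mem' := by intro g hg; simp at hg
  one_mem' := by
    intro g hg
    rw [HahnSeries.coeff_one] at hg
    by_cases h : g = 0
    · exact h ▸ S.zero_mem
    · simp [h] at hg
  add_mem' := by
    intro a b ha hb g hg
    rw [HahnSeries.coeff_add] at hg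
    by_cases h : a.coeff g = 0
    · exact hb g (by intro h'; rw [h, h'] at hg; simp at hg)
    · exact ha g h
  neg_mem' := by
    intro a ha g hg
    rw [HahnSeries.coeff_neg] at hg
    exact ha g (by simpa using hg)
  mul_mem' := by
    intro a b ha hb g hg
    obtain ⟨i, hi, j, hj, rfl⟩ :=
      HahnSeries.support_mul_subset ((HahnSeries.mem_support _ _).mpr hg)
    exact S.add_mem (ha i hi) (hb j hj)

open Polynomial

theorem Subring.isIntegral_iff_exists_monic {R : Type*} [CommRing R] {T : Subring R} {x : R} :
    IsIntegral T x ↔ ∃ p : R[X], p.Monic ∧ (∀ n, p.coeff n ∈ T) ∧ p.eval x = 0 := by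
  constructor
  · rintro ⟨q, hq, hx⟩
    exact ⟨q.map T.subtype, hq.map _, fun n => by simp [coeff_map], by rwa [eval_map]⟩
  · rintro ⟨p, hp, hc, hx⟩
    have hT : (p.coeffs : Set R) ⊆ T := fun c hc' => by
      obtain ⟨n, -, rfl⟩ := Polynomial.mem_coeffs_iff.1 hc'
      exact hc n
    refine ⟨p.toSubring T hT, (monic_toSubring _ _ _).2 hp, ?_⟩
    rw [eval₂_eq_eval_map]
    exact (map_toSubring p T hT).symm ▸ hx

theorem hahnSubring_mono {S T : AddSubmonoid Γ} (h : S ≤ T) :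
    hahnSubring K S ≤ hahnSubring K T :=
  fun _ hf g hg => h (hf g hg)

theorem single_mem_hahnSubring_iff {S : AddSubmonoid Γ} {g : Γ} {c : K} (hc : c ≠ 0) :
    HahnSeries.single g c ∈ hahnSubring K S ↔ g ∈ S := by
  refine ⟨fun h => h g (by simpa using hc), fun hg g' hg' => ?_⟩
  rw [HahnSeries.coeff_single] at hg'
  split_ifs at hg' with h
  · exact h ▸ hg
  · exact absurd rfl hg'

theorem mem_hahnSubring_nonneg_iff {x : HahnSeries Γ K} :
    x ∈ hahnSubring K (AddSubmonoid.nonneg Γ) ↔ 0 ≤ HahnSeries.addVal Γ K x := by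
  rw [HahnSeries.addVal_apply, ← WithTop.coe_zero, HahnSeries.le_orderTop_iff_forall]
  refine ⟨fun hx j hj => ?_, fun hx g hg => ?_⟩
  · by_contra h
    exact (WithTop.coe_lt_coe.1 hj).not_ge (hx j h)
  · by_contra h
    exact hg (hx g (WithTop.coe_lt_coe.2 (not_le.1 h)))

theorem integers_hahnSubring_nonneg :
    (HahnSeries.addVal Γ K).toValuation.Integers (hahnSubring K (AddSubmonoid.nonneg Γ)) := by
  have hle : ∀ x, (HahnSeries.addVal Γ K).toValuation x ≤ 1 ↔
      x ∈ hahnSubring K (AddSubmonoid.nonneg Γ) := fun x => by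
    rw [mem_hahnSubring_nonneg_iff, AddValuation.toValuation_apply]
    exact Iff.rfl
  exact ⟨Subtype.val_injective, fun r => (hle r).2 r.2, fun x hx => ⟨⟨x, (hle x).1 hx⟩, rfl⟩⟩

theorem mem_hahnSubring_nonneg_of_isIntegral {S : AddSubmonoid Γ}
    (hS : S ≤ AddSubmonoid.nonneg Γ) {x : HahnSeries Γ K} (hx : IsIntegral (hahnSubring K S) x) :
    x ∈ hahnSubring K (AddSubmonoid.nonneg Γ) := by
  obtain ⟨p, hp, hc, hpx⟩ := Subring.isIntegral_iff_exists_monic.1 hx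
  have hx' : IsIntegral (hahnSubring K (AddSubmonoid.nonneg Γ)) x :=
    Subring.isIntegral_iff_exists_monic.2 ⟨p, hp, fun n => hahnSubring_mono hS (hc n), hpx⟩
  exact mem_hahnSubring_nonneg_iff.2 (integers_hahnSubring_nonneg.mem_of_integral hx')

theorem closure_insert_single_le_hahnSubring (S : AddSubmonoid Γ) (h : Γ) :
    Subring.closure (insert (HahnSeries.single h (1 : K)) (hahnSubring K S : Set _)) ≤
      hahnSubring K (S ⊔ AddSubmonoid.closure {h}) := by
  rw [Subring.closure_le, Set.insert_subset_iff]
  exact ⟨(single_mem_hahnSubring_iff one_ne_zero).2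
      (le_sup_right (a := S) (AddSubmonoid.subset_closure rfl)),
    hahnSubring_mono le_sup_left⟩

theorem notMem_sup_closure_singleton_of_lt {S : AddSubmonoid Γ}
    (hS : S ≤ AddSubmonoid.nonneg Γ) {a h : Γ} (ha0 : 0 ≤ a) (haS : a ∉ S) (hah : a < h) :
    a ∉ S ⊔ AddSubmonoid.closure {h} := by
  simp only [AddSubmonoid.mem_sup, AddSubmonoid.mem_closure_singleton]
  rintro ⟨s, hs, _, ⟨n, rfl⟩, rfl⟩
  rcases Nat.eq_zero_or_pos n with rfl | hn
  · exact haS (by simpa using hs)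
  · have : h ≤ s + n • h := calc
      h ≤ n • h := le_self_nsmul (ha0.trans hah.le) hn.ne'
      _ ≤ s + n • h := le_add_of_nonneg_left (hS hs)
    exact hah.not_ge this

section Archimedean

variable [Archimedean Γ]

theorem exists_pos_lt_nsmul {b : Γ} (hb : 0 < b) (a : Γ) : ∃ n : ℕ, 0 < n ∧ a < n • b := by
  obtain ⟨n, hn⟩ := exists_lt_nsmul hb a
  refine ⟨n + 1, n.succ_pos, hn.trans ?_⟩
  rw [succ_nsmul]
  exact lt_add_of_pos_right _ hb

theorem exists_pow_mem_hahnSubring {S : AddSubmonoid Γ} {a : Γ} (hlarge : ∀ g, a < g → g ∈ S)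
    {z : HahnSeries Γ K} (hz : ∀ g, z.coeff g ≠ 0 → 0 < g) :
    ∃ n, 0 < n ∧ z ^ n ∈ hahnSubring K S := by
  rcases eq_or_ne z 0 with rfl | hz0
  · exact ⟨1, one_pos, by simp [(hahnSubring K S).zero_mem]⟩
  have hpos : 0 < z.order := hz _ (HahnSeries.coeff_order_eq_zero.not.2 hz0)
  obtain ⟨n, hn, han⟩ := exists_pos_lt_nsmul hpos a
  refine ⟨n, hn, fun g hg => hlarge g ?_⟩
  calc a < n • z.order := han
    _ = (z ^ n).order := (HahnSeries.order_pow z n).symm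
    _ ≤ g := HahnSeries.order_le_of_coeff_ne_zero hg

theorem isIntegral_of_mem_hahnSubring_nonneg {S : AddSubmonoid Γ} {a : Γ}
    (hlarge : ∀ g, a < g → g ∈ S) {x : HahnSeries Γ K}
    (hx : x ∈ hahnSubring K (AddSubmonoid.nonneg Γ)) : IsIntegral (hahnSubring K S) x := by
  classical
  set c := HahnSeries.single (0 : Γ) (x.coeff 0)
  have hc : c ∈ hahnSubring K S := fun g hg => by
    rw [HahnSeries.coeff_single] at hg
    split_ifs at hg with h
    · exact h ▸ S.zero_mem
    · exact absurd rfl hg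
  have hpos : ∀ g, (x - c).coeff g ≠ 0 → 0 < g := fun g hg => by
    rcases eq_or_ne g 0 with rfl | hg0
    · simp [c] at hg
    · exact (hx g (by simpa [c, hg0] using hg)).lt_of_ne' hg0
  have hD : ∀ y ∈ hahnSubring K S, IsIntegral (hahnSubring K S) y := fun y hy =>
    isIntegral_algebraMap (A := HahnSeries Γ K) (x := (⟨y, hy⟩ : hahnSubring K S))
  obtain ⟨n, hn, hzn⟩ := exists_pow_mem_hahnSubring hlarge hpos
  simpa using (IsIntegral.of_pow hn (hD _ hzn)).add (hD c hc)

theorem setOf_nonneg_eq_setOf_nsmul_mem {S : AddSubmonoid Γ} (hS : S ≤ AddSubmonoid.nonneg Γ)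
    {a : Γ} (hlarge : ∀ g, a < g → g ∈ S) :
    {g : Γ | 0 ≤ g} = {g : Γ | ∃ n : ℕ, 0 < n ∧ n • g ∈ S} := by
  ext g
  refine ⟨fun hg => ?_, fun ⟨n, hn, hnS⟩ => (nsmul_nonneg_iff hn.ne').1 (hS hnS)⟩
  rcases hg.eq_or_lt with rfl | hg
  · exact ⟨1, one_pos, by simp [S.zero_mem]⟩
  · obtain ⟨n, hn, han⟩ := exists_pos_lt_nsmul hg a
    exact ⟨n, hn, hlarge _ han⟩

end Archimedean

theorem hahnSubring_rank_one_integral_closure_general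
    (G : AddSubgroup ℝ)
    (S : AddSubmonoid G) (hS : S ≤ AddSubmonoid.nonneg G)
    (a : G) (ha0 : 0 ≤ a) (haS : a ∉ S)
    (hfrac : ∀ x : HahnSeries G K,
      (∃ f g : HahnSeries G K, f ∈ hahnSubring K (AddSubmonoid.nonneg G) ∧
          g ∈ hahnSubring K (AddSubmonoid.nonneg G) ∧ g ≠ 0 ∧ x = f / g) ↔
      (∃ f g : HahnSeries G K, f ∈ hahnSubring K S ∧ g ∈ hahnSubring K S ∧
          g ≠ 0 ∧ x = f / g))
    (hmax : ∀ z : HahnSeries G K,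
      (∃ f g : HahnSeries G K, f ∈ hahnSubring K S ∧ g ∈ hahnSubring K S ∧
          g ≠ 0 ∧ z = f / g) →
      z ∉ hahnSubring K S →
      HahnSeries.single a (1 : K) ∈
        Subring.closure (insert z (hahnSubring K S : Set (HahnSeries G K)))) :
    ({g : G | 0 ≤ g} = {g : G | ∃ n : ℕ, 0 < n ∧ n • g ∈ S}) ∧
      (∀ x : HahnSeries G K, x ∈ hahnSubring K (AddSubmonoid.nonneg G) ↔
        ∃ p : Polynomial (HahnSeries G K), p.Monic ∧
          (∀ n, p.coeff n ∈ hahnSubring K S) ∧ p.eval x = 0) := by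
  have hlarge : ∀ h, a < h → h ∈ S := by
    intro h hah
    by_contra hhS
    set z := HahnSeries.single h (1 : K)
    have hzV : z ∈ hahnSubring K (AddSubmonoid.nonneg G) :=
      (single_mem_hahnSubring_iff one_ne_zero).2 (ha0.trans hah.le)
    have hzD : z ∉ hahnSubring K S := (single_mem_hahnSubring_iff one_ne_zero).not.2 hhS
    have haz := hmax z ((hfrac z).1 ⟨z, 1, hzV, one_mem _, one_ne_zero, (div_one z).symm⟩) hzD
    exact notMem_sup_closure_singleton_of_lt hS ha0 haS hah <|
      (single_mem_hahnSubring_iff one_ne_zero).1 (closure_insert_single_le_hahnSubring S h haz)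
  refine ⟨setOf_nonneg_eq_setOf_nsmul_mem hS hlarge, fun x => ?_⟩
  rw [← Subring.isIntegral_iff_exists_monic]
  exact ⟨isIntegral_of_mem_hahnSubring_nonneg hlarge, mem_hahnSubring_nonneg_of_isIntegral hS⟩

/-- **Corollary 3.7.**
Let `G` be a (rank-one) subgroup of `(ℝ, +)`, `S` a submonoid of `G_{≥0}`, and
`D = [[K^S]] ⊆ V = [[K^{G_{≥0}}]]` with the same quotient field.  If `D` is maximal
excluding (with excluded element `X^a`, `a ∈ G_{≥0} \ S`), then the root closure
`S̄ = ⋃_{n ≥ 1} {g : n·g ∈ S}` equals `G_{≥0}`, and the integral closure of `D` is `V`: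
an element of the Hahn series field lies in `V` iff it is integral over `D`. -/
theorem hahnSubring_rank_one_integral_closure
    (G : AddSubgroup ℝ)
    (S : AddSubmonoid G) (hS : S ≤ AddSubmonoid.nonneg G)
    (a : G) (ha0 : 0 ≤ a) (haS : a ∉ S)
    (hXa : HahnSeries.single a (1 : K) ∉ hahnSubring K S)
    (hfrac : ∀ x : HahnSeries G K,
      (∃ f g : HahnSeries G K, f ∈ hahnSubring K (AddSubmonoid.nonneg G) ∧
          g ∈ hahnSubring K (AddSubmonoid.nonneg G) ∧ g ≠ 0 ∧ x = f / g) ↔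
      (∃ f g : HahnSeries G K, f ∈ hahnSubring K S ∧ g ∈ hahnSubring K S ∧
          g ≠ 0 ∧ x = f / g))
    (hmax : ∀ z : HahnSeries G K,
      (∃ f g : HahnSeries G K, f ∈ hahnSubring K S ∧ g ∈ hahnSubring K S ∧
          g ≠ 0 ∧ z = f / g) →
      z ∉ hahnSubring K S →
      HahnSeries.single a (1 : K) ∈
        Subring.closure (insert z (hahnSubring K S : Set (HahnSeries G K)))) :
    ({g : G | 0 ≤ g} = {g : G | ∃ n : ℕ, 0 < n ∧ n • g ∈ S}) ∧
      (∀ x : HahnSeries G K, x ∈ hahnSubring K (AddSubmonoid.nonneg G) ↔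
        ∃ p : Polynomial (HahnSeries G K), p.Monic ∧
          (∀ n, p.coeff n ∈ hahnSubring K S) ∧ p.eval x = 0) :=
  hahnSubring_rank_one_integral_closure_general G S hS a ha0 haS hfrac hmax
end
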